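/- Let ν be a Borel measure on ℝⁿ, n ∈ ℕ, v ≥ n, and c = (v−n)/(n(v+1)). Suppose that for every d > c, Σ_{t=1}^∞ ν({y ∈ ℝⁿ : the lattice g_t u_y ℤ^{n+1} contains a nonzero vector of norm < e^{−dt}}) < ∞. Then ω(ν) ≤ v, i.e., ν(W_u) = 0 for every u > v, where W_u is the set of y ∈ ℝⁿ with |y·q + p| < ‖q‖^{−u} for infinitely many q ∈ ℤⁿ, some p ∈ ℤ. -/
import Mathlib


open Finset Real ENNReal MeasureTheory

/-- Sup norm of an integer vector. -/
def snormZ {n : ℕ} (q : Fin n → ℤ) : ℝ :=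
  ((Finset.univ.sup fun i => (q i).natAbs : ℕ) : ℝ)

/-- The Euclidean norm of the vector `g_t u_y (p, q)` in `ℝ^{n+1}`, where
`g_t = diag(e^t, e^{−t/n}, …, e^{−t/n})` and `u_y` is unipotent with first row `(1, y)`. -/
noncomputable def latticeVecNorm {n : ℕ} (t : ℝ) (y : Fin n → ℝ) (p : ℤ) (q : Fin n → ℤ) : ℝ :=
  Real.sqrt ((Real.exp t * ((∑ i, y i * q i) + (p : ℝ))) ^ 2 +
    ∑ i, (Real.exp (-t / n) * (q i : ℝ)) ^ 2)

/-- The set `W_u` of `u`-approximable row vectors `y ∈ ℝⁿ`. -/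
def WSet {n : ℕ} (u : ℝ) : Set (Fin n → ℝ) :=
  {y | {q : Fin n → ℤ | ∃ p : ℤ,
    |(∑ i, y i * q i) + (p : ℝ)| < (snormZ q) ^ (-u)}.Infinite}

lemma abs_le_snormZ {n : ℕ} (q : Fin n → ℤ) (i : Fin n) : |(q i : ℝ)| ≤ snormZ q := by
  rw [snormZ]
  have h1 : |(q i : ℝ)| = ((q i).natAbs : ℝ) := by
    rw [Nat.cast_natAbs, Int.cast_abs]
  rw [h1]
  exact Nat.cast_le.mpr (Finset.le_sup (f := fun i => (q i).natAbs) (Finset.mem_univ i))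

lemma snormZ_finite {n : ℕ} (N : ℝ) : {q : Fin n → ℤ | snormZ q ≤ N}.Finite := by
  have hsub : {q : Fin n → ℤ | snormZ q ≤ N} ⊆
      {q : Fin n → ℤ | ∀ i, q i ∈ Set.Icc (-⌈N⌉) ⌈N⌉} := by
    intro q hq i
    have h1 : |(q i : ℝ)| ≤ N := le_trans (abs_le_snormZ q i) hq
    have h2 : |(q i : ℝ)| ≤ (⌈N⌉ : ℝ) := le_trans h1 (Int.le_ceil N)
    have h2 : ((|q i| : ℤ) : ℝ) ≤ ((⌈N⌉ : ℤ) : ℝ) := by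
      rw [Int.cast_abs]; exact le_trans h1 (Int.le_ceil N)
    have h3 : |q i| ≤ ⌈N⌉ := by exact_mod_cast h2
    exact ⟨neg_le_of_abs_le h3, le_of_abs_le h3⟩
  exact (Set.Finite.pi' (fun i => Set.finite_Icc _ _)).subset hsub

lemma exists_snormZ_large {n : ℕ} {S : Set (Fin n → ℤ)} (hS : S.Infinite) (N : ℝ) :
    ∃ q ∈ S, N < snormZ q := by
  by_contra h
  push_neg at h
  exact hS ((snormZ_finite N).subset h)

/-- Borel–Cantelli sufficiency for exponent bounds: let `ν` be a Borel measure on `ℝⁿ`,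
`v ≥ n`, `c = (v−n)/(n(v+1))`. If for every `d > c` the series
`Σ_{t=1}^∞ ν({y : g_t u_y ℤ^{n+1} contains a nonzero vector of norm < e^{−dt}})`
converges, then `ω(ν) ≤ v`, i.e. `ν(W_u) = 0` for every `u > v`. -/
theorem omega_le_of_summable {n : ℕ} (hn : 0 < n) (ν : Measure (Fin n → ℝ))
    (v : ℝ) (hv : (n : ℝ) ≤ v)
    (hsum : ∀ d : ℝ, (v - n) / (n * (v + 1)) < d →
      (∑' t : ℕ, ν {y | ∃ (p : ℤ) (q : Fin n → ℤ), ¬(p = 0 ∧ q = 0) ∧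
        latticeVecNorm ((t : ℝ) + 1) y p q < Real.exp (-d * ((t : ℝ) + 1))}) < ⊤) :
    ∀ u : ℝ, v < u → ν (WSet u) = 0 := by
  intro u hu
  have hn' : (0 : ℝ) < n := by exact_mod_cast hn
  have hn1 : (1 : ℝ) ≤ n := by exact_mod_cast hn
  have hv1 : (0 : ℝ) < v + 1 := by linarith
  have hu1 : (0 : ℝ) < u + 1 := by linarith
  set c : ℝ := (v - n) / (n * (v + 1)) with hc_def
  set cu : ℝ := (u - n) / (n * (u + 1)) with hcu_def
  set d : ℝ := (c + cu) / 2 with hd_def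
  have hccu : c < cu := by
    rw [hc_def, hcu_def, div_lt_div_iff₀ (by positivity) (by positivity)]
    nlinarith [mul_pos hn' (sub_pos.mpr hu)]
  have hc0 : 0 ≤ c := div_nonneg (by linarith) (by positivity)
  have hd1 : c < d := by rw [hd_def]; linarith
  have hd2 : d < cu := by rw [hd_def]; linarith
  have hd0 : 0 ≤ d := le_of_lt (lt_of_le_of_lt hc0 hd1)
  set A : ℕ → Set (Fin n → ℝ) := fun t => {y | ∃ (p : ℤ) (q : Fin n → ℤ), ¬(p = 0 ∧ q = 0) ∧
        latticeVecNorm ((t : ℝ) + 1) y p q < Real.exp (-d * ((t : ℝ) + 1))} with hA_def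
  have hsum' : (∑' t : ℕ, ν (A t)) ≠ ⊤ := (hsum d hd1).ne
  refine measure_mono_null (fun y hy => ?_) (MeasureTheory.measure_limsup_atTop_eq_zero hsum')
  -- y ∈ WSet u; show y ∈ limsup A atTop
  rw [Filter.mem_limsup_iff_frequently_mem, Filter.frequently_atTop]
  intro T
  -- constants
  set K : ℝ := n * (u + 1) / (n + 1) with hK_def
  have hK : 0 < K := by positivity
  set ε : ℝ := (u - n) / (n + 1) - d * K with hε_def
  have hεeq : ε = ((u - n) - d * (n * (u + 1))) / (n + 1) := by
    rw [hε_def, hK_def]; ring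
  have hdcu : d * (n * (u + 1)) < u - n := by
    have := (lt_div_iff₀ (by positivity : (0:ℝ) < n * (u + 1))).mp hd2
    linarith
  have hε : 0 < ε := by rw [hεeq]; exact div_pos (by linarith) (by linarith)
  set L : ℝ := max ((T : ℝ) / K) ((2 * d + Real.log (Real.exp 2 + n)) / (2 * ε)) with hL_def
  obtain ⟨q, hqS, hqN⟩ := exists_snormZ_large hy (max 1 (Real.exp L))
  obtain ⟨p, hp⟩ := hqS
  set Q : ℝ := snormZ q with hQ_def
  have hQ1 : 1 < Q := lt_of_le_of_lt (le_max_left _ _) hqN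
  have hQ0 : 0 < Q := by linarith
  set ℓ : ℝ := Real.log Q with hℓ_def
  have hℓL : L < ℓ := by
    rw [hℓ_def]
    calc L = Real.log (Real.exp L) := (Real.log_exp L).symm
    _ < Real.log Q := Real.log_lt_log (Real.exp_pos L)
        (lt_of_le_of_lt (le_max_right _ _) hqN)
  have hℓ0 : 0 < ℓ := Real.log_pos hQ1
  have hQexp : Q = Real.exp ℓ := (Real.exp_log hQ0).symm
  set s : ℝ := K * ℓ with hs_def
  have hs0 : 0 ≤ s := by positivity
  set t : ℕ := ⌊s⌋₊ with ht_def
  set τ : ℝ := (t : ℝ) + 1 with hτ_def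
  have hsτ : s < τ := by rw [hτ_def, ht_def]; exact Nat.lt_floor_add_one s
  have hτs : τ ≤ s + 1 := by
    rw [hτ_def, ht_def]
    have := Nat.floor_le hs0
    linarith
  have hTt : T ≤ t := by
    rw [ht_def]
    apply Nat.le_floor
    have h1 : (T : ℝ) / K < ℓ := lt_of_le_of_lt (le_max_left _ _) hℓL
    have := (div_lt_iff₀ hK).mp h1
    rw [hs_def]; linarith
  refine ⟨t, hTt, ?_⟩
  -- show y ∈ A t
  have hqne : q ≠ 0 := by
    intro h
    rw [hQ_def, h] at hQ1
    simp [snormZ] at hQ1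
  simp only [hA_def, Set.mem_setOf_eq]
  refine ⟨p, q, fun h => hqne h.2, ?_⟩
  rw [← hτ_def]
  unfold latticeVecNorm
  rw [Real.sqrt_lt' (Real.exp_pos _)]
  set a : ℝ := (∑ i, y i * q i) + (p : ℝ) with ha_def
  -- first term bound
  have hpa : |a| < Real.exp (-u * ℓ) := by
    have : (snormZ q) ^ (-u) = Real.exp (-u * ℓ) := by
      rw [Real.rpow_def_of_pos hQ0]
      congr 1
      rw [hℓ_def]; ring
    rw [ha_def, ← this]
    exact hp
  have h1 : (Real.exp τ * a) ^ 2 < Real.exp (2 * τ - 2 * u * ℓ) := by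
    have ha2 : a ^ 2 < Real.exp (-u * ℓ) ^ 2 := by
      have := abs_lt.mp hpa
      exact sq_lt_sq' this.1 this.2
    calc (Real.exp τ * a) ^ 2 = Real.exp τ ^ 2 * a ^ 2 := by ring
      _ < Real.exp τ ^ 2 * Real.exp (-u * ℓ) ^ 2 :=
        mul_lt_mul_of_pos_left ha2 (by positivity)
      _ = Real.exp (2 * τ - 2 * u * ℓ) := by
        simp only [sq, ← Real.exp_add]; congr 1; ring
  -- second term bound
  have h2 : ∑ i, (Real.exp (-τ / n) * (q i : ℝ)) ^ 2 ≤ n * Real.exp (-2 * τ / n + 2 * ℓ) := by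
    have hbound : ∀ i : Fin n, (Real.exp (-τ / n) * (q i : ℝ)) ^ 2 ≤
        Real.exp (-2 * τ / n + 2 * ℓ) := by
      intro i
      have hqi : |(q i : ℝ)| ≤ Real.exp ℓ := by
        rw [← hQexp]; exact abs_le_snormZ q i
      have hqi2 : (q i : ℝ) ^ 2 ≤ Real.exp ℓ ^ 2 := by
        have := abs_le.mp hqi
        exact sq_le_sq' this.1 this.2
      calc (Real.exp (-τ / n) * (q i : ℝ)) ^ 2 = Real.exp (-τ / n) ^ 2 * (q i : ℝ) ^ 2 := by
            ring
        _ ≤ Real.exp (-τ / n) ^ 2 * Real.exp ℓ ^ 2 :=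
            mul_le_mul_of_nonneg_left hqi2 (by positivity)
        _ = Real.exp (-2 * τ / n + 2 * ℓ) := by
            simp only [sq, ← Real.exp_add]; congr 1; ring
    calc ∑ i, (Real.exp (-τ / n) * (q i : ℝ)) ^ 2
        ≤ ∑ _i : Fin n, Real.exp (-2 * τ / n + 2 * ℓ) :=
          Finset.sum_le_sum fun i _ => hbound i
      _ = n * Real.exp (-2 * τ / n + 2 * ℓ) := by
          rw [Finset.sum_const, Finset.card_univ, Fintype.card_fin, nsmul_eq_mul]
  -- put together with the exponent comparison
  set β : ℝ := ((n : ℝ) - u) / (n + 1) with hβ_def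
  have hKβ : K - u = β := by rw [hK_def, hβ_def]; field_simp; ring
  have hKβ' : -K / n + 1 = β := by rw [hK_def, hβ_def]; field_simp; ring
  have hb1 : 2 * τ - 2 * u * ℓ ≤ 2 * β * ℓ + 2 := by
    have : 2 * τ ≤ 2 * s + 2 := by linarith
    have hs : 2 * s - 2 * u * ℓ = 2 * β * ℓ := by
      rw [hs_def, ← hKβ]; ring
    linarith
  have hb2 : -2 * τ / n + 2 * ℓ ≤ 2 * β * ℓ := by
    have hmono : -2 * τ / n ≤ -2 * s / n :=
      (div_le_div_iff_of_pos_right hn').mpr (by linarith)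
    have heq : -2 * s / n + 2 * ℓ = 2 * β * ℓ := by
      rw [hs_def, ← hKβ']
      field_simp
    linarith
  -- exponent comparison from the choice of L
  have hεβ : ε = -β - d * K := by rw [hε_def, hβ_def]; ring
  have hℓ2 : 2 * d + Real.log (Real.exp 2 + n) < 2 * ε * ℓ := by
    have h1 : (2 * d + Real.log (Real.exp 2 + n)) / (2 * ε) < ℓ :=
      lt_of_le_of_lt (le_max_right _ _) hℓL
    have := (div_lt_iff₀ (by linarith : (0:ℝ) < 2 * ε)).mp h1
    linarith
  have hlog : Real.log (Real.exp 2 + n) + 2 * β * ℓ < -(2 * d) * (K * ℓ) - 2 * d := by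
    have heq : 2 * ε * ℓ = -(2 * (β * ℓ)) - 2 * (d * (K * ℓ)) := by rw [hεβ]; ring
    linarith [hℓ2, heq]
  have hpos : (0 : ℝ) < Real.exp 2 + n := by positivity
  have hsq : Real.exp (-d * τ) ^ 2 = Real.exp (-(2 * d) * τ) := by
    rw [sq, ← Real.exp_add]; congr 1; ring
  calc (Real.exp τ * a) ^ 2 + ∑ i, (Real.exp (-τ / n) * (q i : ℝ)) ^ 2
      < Real.exp (2 * β * ℓ + 2) + n * Real.exp (2 * β * ℓ) := by
        have e1 : Real.exp (2 * τ - 2 * u * ℓ) ≤ Real.exp (2 * β * ℓ + 2) :=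
          Real.exp_le_exp.mpr hb1
        have e2 : (n : ℝ) * Real.exp (-2 * τ / n + 2 * ℓ) ≤ n * Real.exp (2 * β * ℓ) :=
          mul_le_mul_of_nonneg_left (Real.exp_le_exp.mpr hb2) hn'.le
        exact add_lt_add_of_lt_of_le (h1.trans_le e1) (h2.trans e2)
    _ = (Real.exp 2 + n) * Real.exp (2 * β * ℓ) := by
        have : Real.exp (2 * β * ℓ + 2) = Real.exp 2 * Real.exp (2 * β * ℓ) := by
          rw [← Real.exp_add]; congr 1; ring
        rw [this]; ring
    _ < Real.exp (-(2 * d) * (K * ℓ) - 2 * d) := by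
        have : (Real.exp 2 + n) * Real.exp (2 * β * ℓ) =
            Real.exp (Real.log (Real.exp 2 + n) + 2 * β * ℓ) := by
          rw [Real.exp_add, Real.exp_log hpos]
        rw [this]
        exact Real.exp_lt_exp.mpr hlog
    _ ≤ Real.exp (-d * τ) ^ 2 := by
        rw [hsq]
        apply Real.exp_le_exp.mpr
        have h2d : (0 : ℝ) ≤ 2 * d := by linarith
        have hτs' : τ ≤ K * ℓ + 1 := by rw [← hs_def]; exact hτs
        have := mul_le_mul_of_nonneg_left hτs' h2d
        linarith
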